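/- In the OoO semantics, a memory store cannot be committed before an earlier uncommitted store to the same address: if σ₀ → σ₁ → σ₂ where the first step is step-param (α₁,t₁) and the second is (Cmt(a,v), t₂) with t₂ < t₁, then α₁ is not a commit Cmt(a,v') to the same address a. -/

import Mathlib

open scoped Classical

namespace MIL

abbrev Name := ℕ
abbrev Val := ℕ
abbrev Store := Name → Option Val

inductive Res : Type
  | PC | Reg | Mem
deriving DecidableEq

/-- Internal-operation expressions: a set of free names and an evaluation
function, coherent (depends only on free names) and monotone in the storage. -/
structure Exp where
  fns : Set Name
  eval : Store → Option Val
  coh : ∀ s1 s2 : Store, (∀ x ∈ fns, s1 x = s2 x) → eval s1 = eval s2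
  mono : ∀ s1 s2 : Store, (∀ n v, s1 n = some v → s2 n = some v) →
    ∀ v, eval s1 = some v → eval s2 = some v

/-- Boolean guard expressions. -/
structure BExp where
  fns : Set Name
  eval : Store → Option Bool
  coh : ∀ s1 s2 : Store, (∀ x ∈ fns, s1 x = s2 x) → eval s1 = eval s2
  mono : ∀ s1 s2 : Store, (∀ n v, s1 n = some v → s2 n = some v) →
    ∀ b, eval s1 = some b → eval s2 = some b

inductive Op : Type
  | internal (e : Exp)
  | load (τ : Res) (ta : Name)
  | store (τ : Res) (ta : Name) (tv : Name)

structure MicroInstr where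
  name : Name
  guard : BExp
  op : Op

def opFns : Op → Set Name
  | .internal e => e.fns
  | .load _ ta => {ta}
  | .store _ ta tv => {ta, tv}

/-- Free names of a microinstruction. -/
def fns (ι : MicroInstr) : Set Name := ι.guard.fns ∪ opFns ι.op

def isLoad (ι : MicroInstr) : Prop := ∃ τ ta, ι.op = Op.load τ ta
def isPCStore (ι : MicroInstr) : Prop := ∃ ta tv, ι.op = Op.store Res.PC ta tv
def isMemStore (ι : MicroInstr) : Prop := ∃ ta tv, ι.op = Op.store Res.Mem ta tv
def isInternal (ι : MicroInstr) : Prop := ∃ e, ι.op = Op.internal e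

/-- MIL state: microinstructions, storage, committed stores, fetched PC stores. -/
structure State where
  I : Set MicroInstr
  s : Store
  C : Set Name
  F : Set Name

/-- Bound names of a set of microinstructions. -/
def bn (S : Set MicroInstr) : Set Name := {t | ∃ ι ∈ S, ι.name = t}

/-- The resource and address name accessed by a load or store. -/
def accRes (ι : MicroInstr) : Option (Res × Name) :=
  match ι.op with
  | .load τ ta => some (τ, ta)
  | .store τ ta _ => some (τ, ta)
  | _ => none

/-- str-may relative to an access of resource `τ` at address name `ta` by name `t`. -/
def strMayA (σ : State) (t : Name) (τ : Res) (ta : Name) : Set MicroInstr :=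
  {ι' | ι' ∈ σ.I ∧ ι'.name < t ∧
    (∃ ta' tv', ι'.op = Op.store τ ta' tv' ∧
      (ι'.guard.eval σ.s = some true ∨ ι'.guard.eval σ.s = none) ∧
      (τ = Res.PC ∨ σ.s ta' = σ.s ta ∨ σ.s ta' = none ∨ σ.s ta = none))}

/-- ι'' overwrites ι' w.r.t. an access of resource τ at address ta. -/
def overwrites (σ : State) (τ : Res) (ta : Name) (ι'' ι' : MicroInstr) : Prop :=
  ι'.name < ι''.name ∧ ι''.guard.eval σ.s = some true ∧
  (τ = Res.PC ∨
    ∃ ta'' tv'' ta' tv', ι''.op = Op.store τ ta'' tv'' ∧ ι'.op = Op.store τ ta' tv' ∧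
      ∃ v, σ.s ta'' = some v ∧ (σ.s ta = some v ∨ σ.s ta' = some v))

/-- Active stores relative to an access. -/
def strActA (σ : State) (t : Name) (τ : Res) (ta : Name) : Set MicroInstr :=
  {ι' | ι' ∈ strMayA σ t τ ta ∧
    ¬ ∃ ι'' ∈ strMayA σ t τ ta, overwrites σ τ ta ι'' ι'}

/-- str-may(σ,t) for the (load or store) microinstruction named t. -/
def strMay (σ : State) (t : Name) : Set MicroInstr :=
  {ι' | ∃ ι ∈ σ.I, ι.name = t ∧ ∃ τ ta, accRes ι = some (τ, ta) ∧ ι' ∈ strMayA σ t τ ta}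

/-- str-act(σ,t) for the (load or store) microinstruction named t. -/
def strAct (σ : State) (t : Name) : Set MicroInstr :=
  {ι' | ∃ ι ∈ σ.I, ι.name = t ∧ ∃ τ ta, accRes ι = some (τ, ta) ∧ ι' ∈ strActA σ t τ ta}

/-- Names of active stores. -/
def asn (σ : State) (t : Name) : Set Name := bn (strAct σ t)

/-- Potential sources of a load t. -/
def srcs (σ : State) (t : Name) : Set Name :=
  {x | ∃ t0 ∈ asn σ t, (∀ t1 ∈ asn σ t, t0 ≤ t1) ∧
    ∃ ι' ∈ σ.I, t0 ≤ ι'.name ∧ ι'.name < t ∧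
      ∃ τ' ta' tv', ι'.op = Op.store τ' ta' tv' ∧ (x ∈ ι'.guard.fns ∨ x = ta')}

/-- Dependencies of the microinstruction named t in σ. -/
def deps (σ : State) (t : Name) : Set Name :=
  {x | ∃ ι ∈ σ.I, ι.name = t ∧
    (x ∈ fns ι ∨ (isLoad ι ∧ (x ∈ asn σ t ∨ x ∈ srcs σ t)))}

noncomputable def restrictStore (s : Store) (T : Set Name) : Store :=
  fun n => if n ∈ T then s n else none

def withStore (σ : State) (s : Store) : State := ⟨σ.I, s, σ.C, σ.F⟩

noncomputable def restrictState (σ : State) (T : Set Name) : State :=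
  withStore σ (restrictStore σ.s T)

/-- t-equivalence of states. -/
def tEquiv (σ1 σ2 : State) (t : Name) : Prop :=
  ∃ ι, ι ∈ σ1.I ∧ ι ∈ σ2.I ∧ ι.name = t ∧
    (∀ x ∈ fns ι, σ1.s x = σ2.s x) ∧
    (isLoad ι →
      strAct (restrictState σ1 (deps σ1 t)) t = strAct (restrictState σ2 (deps σ2 t)) t ∧
      ∀ ι' ∈ strAct (restrictState σ1 (deps σ1 t)) t, σ1.s ι'.name = σ2.s ι'.name)

inductive Obs : Type
  | silent
  | dl (v : Val)
  | ds (v : Val)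
  | il (v : Val)
deriving DecidableEq

/-- Semantics of a single microinstruction: value and observation. -/
inductive Sem : MicroInstr → State → Val → Obs → Prop
  | internal {ι : MicroInstr} {σ : State} {e : Exp} {v : Val} :
      ι.op = Op.internal e → e.eval σ.s = some v → Sem ι σ v Obs.silent
  | store {ι : MicroInstr} {σ : State} {τ : Res} {ta tv : Name} {v : Val} :
      ι.op = Op.store τ ta tv → σ.s tv = some v → (τ = Res.PC ∨ σ.s ta ≠ none) →
      Sem ι σ v Obs.silent
  | loadS {ι : MicroInstr} {σ : State} {τ : Res} {ta ts : Name} {v : Val} :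
      ι.op = Op.load τ ta → bn (strAct σ ι.name) = {ts} →
      (τ = Res.PC ∨ σ.s ta ≠ none) → σ.s ts = some v →
      ¬(ts ∈ σ.C ∧ τ = Res.Mem) → Sem ι σ v Obs.silent
  | loadC {ι : MicroInstr} {σ : State} {ta ts : Name} {a v : Val} :
      ι.op = Op.load Res.Mem ta → bn (strAct σ ι.name) = {ts} →
      σ.s ta = some a → σ.s ts = some v → ts ∈ σ.C → Sem ι σ v (Obs.dl a)

/-- A program is given by its translation function. -/
structure Prog where
  translate : Val → Name → Set MicroInstr

noncomputable def maxName (I : Set MicroInstr) : Name := sSup (bn I)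

def updS (s : Store) (t : Name) (v : Val) : Store := fun n => if n = t then some v else s n
def delS (s : Store) (t : Name) : Store := fun n => if n = t then none else s n

inductive Rule : Type
  | exe
  | cmt (a v : Val)
  | ftc (I' : Set MicroInstr)

/-- Out-of-order semantics, with the rule tag and affected name (step-param) as indices. -/
inductive Step (p : Prog) : State → Obs → Rule → Name → State → Prop
  | exe {σ : State} {ι : MicroInstr} {t : Name} {v : Val} {l : Obs} :
      ι ∈ σ.I → ι.name = t → σ.s t = none →
      ι.guard.eval σ.s = some true → Sem ι σ v l →
      Step p σ l Rule.exe t (withStore σ (updS σ.s t v))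
  | cmt {σ : State} {ι : MicroInstr} {t ta tv : Name} {a v : Val} :
      ι ∈ σ.I → ι.name = t → ι.op = Op.store Res.Mem ta tv →
      σ.s t = some v → σ.s ta = some a → t ∉ σ.C → bn (strMay σ t) ⊆ σ.C →
      Step p σ (Obs.ds a) (Rule.cmt a v) t ⟨σ.I, σ.s, σ.C ∪ {t}, σ.F⟩
  | ftc {σ : State} {ι : MicroInstr} {t ta tv : Name} {a : Val} :
      ι ∈ σ.I → ι.name = t → ι.op = Op.store Res.PC ta tv →
      σ.s t = some a → t ∉ σ.F → bn (strMay σ t) ⊆ σ.F →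
      Step p σ (Obs.il a) (Rule.ftc (p.translate a (maxName σ.I))) t
        ⟨σ.I ∪ p.translate a (maxName σ.I), σ.s, σ.C, σ.F ∪ {t}⟩

/-- Completed microinstructions (in-order semantics). -/
def completed (σ : State) (ι : MicroInstr) : Prop :=
  ι.guard.eval σ.s = some false ∨
  ((∀ ta tv, ι.op ≠ Op.store Res.Mem ta tv) ∧ (∀ ta tv, ι.op ≠ Op.store Res.PC ta tv) ∧
    σ.s ι.name ≠ none) ∨
  ι.name ∈ σ.C ∪ σ.F

/-- In-order semantics: OoO steps where all program-order earlier
microinstructions are completed. -/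
inductive InStep (p : Prog) : State → Obs → Rule → Name → State → Prop
  | mk {σ : State} {l : Obs} {α : Rule} {t : Name} {σ' : State} :
      Step p σ l α t σ' → (∀ ι ∈ σ.I, ι.name < t → completed σ ι) →
      InStep p σ l α t σ'

/-- Executions of a labelled transition system. -/
inductive ExecG {S R : Type} (Tr : S → Obs → R → Name → S → Prop) :
    S → List (Obs × R × Name) → S → Prop
  | nil (s : S) : ExecG Tr s [] s
  | cons {s s' s'' : S} {l : Obs} {r : R} {t : Name} {tr : List (Obs × R × Name)} :
      Tr s l r t s' → ExecG Tr s' tr s'' → ExecG Tr s ((l, r, t) :: tr) s''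

/-- Values committed to address a along an OoO/in-order trace. -/
def commitsR (tr : List (Obs × Rule × Name)) (a : Val) : List Val :=
  tr.filterMap fun x => match x.2.1 with
    | Rule.cmt a' v => if a' = a then some v else none
    | _ => none

/-- Wellformed programs: properties of the translation function. -/
structure WFProg (p : Prog) : Prop where
  uniqNames : ∀ v t ι1 ι2, ι1 ∈ p.translate v t → ι2 ∈ p.translate v t →
    ι1.name = ι2.name → ι1 = ι2
  fnLt : ∀ v t ι, ι ∈ p.translate v t → ∀ x ∈ fns ι, x < ι.name
  freshGt : ∀ v t ι, ι ∈ p.translate v t → t < ι.name ∧ ∀ x ∈ fns ι, t < x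
  pcLoadBeforeStore : ∀ v t ι1 ι2, ι1 ∈ p.translate v t → ι2 ∈ p.translate v t →
    (∃ ta, ι1.op = Op.load Res.PC ta) → isPCStore ι2 → ι1.name < ι2.name
  pcStoreNotFree : ∀ v t ι1 ι2, ι1 ∈ p.translate v t → ι2 ∈ p.translate v t →
    isPCStore ι1 → ι1.name ∉ fns ι2
  pcStoreUnique : ∀ v t (s : Store), ∃! tn : Name, ∃ ι ∈ p.translate v t,
    ι.name = tn ∧ isPCStore ι ∧ ι.guard.eval s = some true

/-- Wellformedness invariants of states. -/
structure WFState (σ : State) : Prop where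
  finI : σ.I.Finite
  uniq : ∀ ι1 ∈ σ.I, ∀ ι2 ∈ σ.I, ι1.name = ι2.name → ι1 = ι2
  fnLt : ∀ ι ∈ σ.I, ∀ x ∈ fns ι, x < ι.name
  cExec : ∀ t ∈ σ.C, σ.s t ≠ none
  fExec : ∀ t ∈ σ.F, σ.s t ≠ none
  cMem : ∀ t ∈ σ.C, ∃ ι ∈ σ.I, ι.name = t ∧ isMemStore ι
  fPC : ∀ t ∈ σ.F, ∃ ι ∈ σ.I, ι.name = t ∧ isPCStore ι
  execGuard : ∀ ι ∈ σ.I, σ.s ι.name ≠ none → ι.guard.eval σ.s = some true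
  sDom : ∀ t, σ.s t ≠ none → ∃ ι ∈ σ.I, ι.name = t

/-- Speculative states: OoO state plus snapshots δ and predicted names P. -/
abbrev Snap := Store

structure SState where
  σ : State
  δ : Name → Option Snap
  P : Set Name

inductive SRule : Type
  | prd | exe | pexe | ret | rbk
  | cmt (a v : Val)
  | ftc (I' : Set MicroInstr)

/-- t' ≺ t : t' references t through its snapshot. -/
def precOf (δ : Name → Option Snap) (t' t : Name) : Prop :=
  ∃ d, δ t' = some d ∧ d t ≠ none

def updδ (δ : Name → Option Snap) (t : Name) (d : Snap) : Name → Option Snap :=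
  fun n => if n = t then some d else δ n

def delδ (δ : Name → Option Snap) (t : Name) : Name → Option Snap :=
  fun n => if n = t then none else δ n

/-- Speculative semantics. -/
inductive SStep (p : Prog) : SState → Obs → SRule → Name → SState → Prop
  | prd {h : SState} {t : Name} {ι : MicroInstr} {e : Exp} {v : Val} :
      ι ∈ h.σ.I → ι.name = t → ι.op = Op.internal e → h.σ.s t = none →
      SStep p h Obs.silent SRule.prd t
        ⟨withStore h.σ (updS h.σ.s t v), updδ h.δ t (fun _ => none), h.P ∪ {t}⟩
  | exe {h : SState} {l : Obs} {t : Name} {σ' : State} :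
      Step p h.σ l Rule.exe t σ' → t ∉ h.P →
      SStep p h l SRule.exe t
        ⟨σ', updδ h.δ t (restrictStore h.σ.s (deps h.σ t)), h.P⟩
  | pexe {h : SState} {l : Obs} {t : Name} {σ' : State} :
      t ∈ h.P → Step p (withStore h.σ (delS h.σ.s t)) l Rule.exe t σ' →
      SStep p h l SRule.pexe t
        ⟨σ', updδ h.δ t (restrictStore h.σ.s (deps h.σ t)), h.P \ {t}⟩
  | cmt {h : SState} {l : Obs} {a v : Val} {t : Name} {σ' : State} :
      Step p h.σ l (Rule.cmt a v) t σ' → h.δ t = none →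
      SStep p h l (SRule.cmt a v) t ⟨σ', h.δ, h.P⟩
  | ftc {h : SState} {l : Obs} {I' : Set MicroInstr} {t : Name} {σ' : State} :
      Step p h.σ l (Rule.ftc I') t σ' →
      SStep p h l (SRule.ftc I') t
        ⟨σ', fun n => if n ∈ bn I' then some (restrictStore h.σ.s {t}) else h.δ n, h.P⟩
  | ret {h : SState} {t : Name} {d : Snap} :
      h.σ.s t ≠ none → h.δ t = some d →
      (∀ n, d n ≠ none → h.δ n = none) → t ∉ h.P →
      tEquiv h.σ (withStore h.σ d) t →
      SStep p h Obs.silent SRule.ret t ⟨h.σ, delδ h.δ t, h.P⟩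
  | rbk {h : SState} {t : Name} {d : Snap} :
      t ∉ h.P → t ∉ h.σ.F → h.δ t = some d →
      ¬ tEquiv h.σ (withStore h.σ d) t →
      SStep p h Obs.silent SRule.rbk t
        ⟨withStore h.σ (delS h.σ.s t), delδ h.δ t, h.P⟩
  | rbkF {h : SState} {t : Name} {d : Snap} :
      t ∉ h.P → t ∈ h.σ.F → h.δ t = some d →
      ¬ tEquiv h.σ (withStore h.σ d) t →
      SStep p h Obs.silent SRule.rbk t
        ⟨⟨{ι ∈ h.σ.I | ¬ Relation.TransGen (precOf h.δ) ι.name t},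
          fun n => if n = t ∨ Relation.TransGen (precOf h.δ) n t then none else h.σ.s n,
          h.σ.C,
          {n ∈ h.σ.F | ¬(n = t ∨ Relation.TransGen (precOf h.δ) n t)}⟩,
         fun n => if n = t ∨ Relation.TransGen (precOf h.δ) n t then none else h.δ n,
         {n ∈ h.P | ¬(n = t ∨ Relation.TransGen (precOf h.δ) n t)}⟩

/-- Values committed to address a along a speculative trace. -/
def commitsS (tr : List (Obs × SRule × Name)) (a : Val) : List Val :=
  tr.filterMap fun x => match x.2.1 with
    | SRule.cmt a' v => if a' = a then some v else none
    | _ => none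

def OoOStepAny (p : Prog) (σ σ' : State) : Prop := ∃ l α t, Step p σ l α t σ'
def SStepAny (p : Prog) (h h' : SState) : Prop := ∃ l r t, SStep p h l r t h'

/-- Initial states: one committed, executed store per resource. -/
def InitState (σ : State) : Prop :=
  ∀ ι ∈ σ.I, (∃ τ ta tv, ι.op = Op.store τ ta tv) ∧ σ.s ι.name ≠ none ∧ ι.name ∈ σ.C

def Reach (p : Prog) (σ : State) : Prop :=
  ∃ σ0, InitState σ0 ∧ WFState σ0 ∧ Relation.ReflTransGen (OoOStepAny p) σ0 σ

def SReach (p : Prog) (h : SState) : Prop :=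
  ∃ σ0, InitState σ0 ∧ WFState σ0 ∧
    Relation.ReflTransGen (SStepAny p) ⟨σ0, fun _ => none, ∅⟩ h

/-- t' was produced (decoded) by the PC store t. -/
def producedBy (h : SState) (t' t : Name) : Prop :=
  ∃ d, h.δ t' = some d ∧ d t ≠ none

/-- The trace (non-silent observations) of an execution. -/
def traceOf {R : Type} (tr : List (Obs × R × Name)) : List Obs :=
  (tr.map fun x => x.1).filter fun l => decide (l ≠ Obs.silent)

/-- ≈_MIL : MIL-constant-time state equivalence. -/
def MILEquiv (σ σ' : State) : Prop :=
  σ.I = σ'.I ∧ σ.C = σ'.C ∧ σ.F = σ'.F ∧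
  (∀ ι ∈ σ.I, ∀ τ ta, τ ≠ Res.PC →
    ((ι.op = Op.load τ ta ∨ ∃ tv, ι.op = Op.store τ ta tv) →
      ι.guard.eval σ.s = ι.guard.eval σ'.s ∧
      (σ.s ι.name = none ↔ σ'.s ι.name = none) ∧
      (ι.guard.eval σ.s = some true → σ.s ta = σ'.s ta))) ∧
  (∀ ι ∈ σ.I, ∀ ta tv, ι.op = Op.store Res.PC ta tv →
    ι.guard.eval σ.s = ι.guard.eval σ'.s ∧
    (σ.s ι.name = none ↔ σ'.s ι.name = none) ∧
    (ι.guard.eval σ.s = some true → σ.s tv = σ'.s tv))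

/-- MIL constant time w.r.t. a security policy Pol. -/
def MILConstantTime (p : Prog) (Pol : State → State → Prop) : Prop :=
  ∀ σ1 σ2, Pol σ1 σ2 →
    ∀ tr1 tr2 σ1' σ2', ExecG (InStep p) σ1 tr1 σ1' → ExecG (InStep p) σ2 tr2 σ2' →
      tr1.length = tr2.length → MILEquiv σ1' σ2'

/-- Relation between guard expressions up to a renaming g of names. -/
def bexpRel (g : Name → Name) (e2 e1 : BExp) : Prop :=
  (∀ x, x ∈ e1.fns ↔ ∃ y ∈ e2.fns, g y = x) ∧
  ∀ s2 s1 : Store, (∀ x ∈ e2.fns, s2 x = s1 (g x)) → e2.eval s2 = e1.eval s1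

def expRel (g : Name → Name) (e2 e1 : Exp) : Prop :=
  (∀ x, x ∈ e1.fns ↔ ∃ y ∈ e2.fns, g y = x) ∧
  ∀ s2 s1 : Store, (∀ x ∈ e2.fns, s2 x = s1 (g x)) → e2.eval s2 = e1.eval s1

def opRel (g : Name → Name) : Op → Op → Prop
  | Op.internal e2, Op.internal e1 => expRel g e2 e1
  | Op.load τ2 ta2, Op.load τ1 ta1 => τ1 = τ2 ∧ ta1 = g ta2
  | Op.store τ2 ta2 tv2, Op.store τ1 ta1 tv1 => τ1 = τ2 ∧ ta1 = g ta2 ∧ tv1 = g tv2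
  | _, _ => False

def instrRel (g : Name → Name) (ι2 ι1 : MicroInstr) : Prop :=
  ι1.name = g ι2.name ∧ bexpRel g ι2.guard ι1.guard ∧ opRel g ι2.op ι1.op

/-- The bisimulation relation R between OoO states and speculative states:
wellformed partitioning, bijection on the unconditionally fetched part,
and correspondence of commits, storage (outside dom δ), and fetches. -/
def Rrel (σ1 : State) (h : SState) : Prop :=
  ∃ (part : MicroInstr → ℕ) (g : Name → Name) (f : MicroInstr → MicroInstr),
    (∀ ι ∈ h.σ.I, part ι = 0 → h.δ ι.name = none) ∧
    (∀ i, i ≠ 0 → (∃ ι ∈ h.σ.I, part ι = i) →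
      ∃ ι0 ∈ h.σ.I, isPCStore ι0 ∧ part ι0 < i ∧
        ∀ ι ∈ h.σ.I, part ι = i → producedBy h ι.name ι0.name) ∧
    (Set.BijOn f
      {ι ∈ h.σ.I | part ι = 0 ∨ ∃ ι0 ∈ h.σ.I, part ι0 = 0 ∧ isPCStore ι0 ∧
        producedBy h ι.name ι0.name} σ1.I) ∧
    (∀ ι ∈ h.σ.I, (part ι = 0 ∨ ∃ ι0 ∈ h.σ.I, part ι0 = 0 ∧ isPCStore ι0 ∧
        producedBy h ι.name ι0.name) →
      instrRel g ι (f ι) ∧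
      (ι.name ∈ h.σ.C ↔ g ι.name ∈ σ1.C) ∧
      ((match h.δ ι.name with | none => h.σ.s ι.name | some _ => none) = σ1.s (g ι.name)) ∧
      ((ι.name ∈ h.σ.F ∧ h.δ ι.name = none) ↔ g ι.name ∈ σ1.F)) ∧
    (∀ t, t ∈ h.σ.C → ∃ ι ∈ h.σ.I, ι.name = t ∧
      (part ι = 0 ∨ ∃ ι0 ∈ h.σ.I, part ι0 = 0 ∧ isPCStore ι0 ∧ producedBy h t ι0.name))

/-- The OoO self-bisimulation used for constant-time security. -/
def RelCT (p : Prog) (Pol : State → State → Prop) (σ σ' : State) : Prop :=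
  MILEquiv σ σ' ∧ ∃ σ0 σ0' tr tr', Pol σ0 σ0' ∧ ExecG (Step p) σ0 tr σ ∧
    ExecG (Step p) σ0' tr' σ' ∧ tr.length = tr'.length

end MIL

/-!
A commit leaves instructions and storage unchanged. So the store `t₂`, being executed and hence
(by well-formedness) enabled, is already in `σ₀` an earlier store to the address of `t₁`, i.e. it
lies in `str-may(σ₀, t₁)`; the commit rule for `t₁` then forces `t₂ ∈ C`, so it cannot be
committed afterwards.
-/

namespace MIL

theorem mem_strMay_of_memStore {σ : State} {ι ι' : MicroInstr} {ta tv ta' tv' : Name}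
    (hι : ι ∈ σ.I) (hop : ι.op = Op.store Res.Mem ta tv)
    (hι' : ι' ∈ σ.I) (hop' : ι'.op = Op.store Res.Mem ta' tv')
    (hlt : ι'.name < ι.name) (hguard : ι'.guard.eval σ.s = some true)
    (haddr : σ.s ta' = σ.s ta) : ι' ∈ strMay σ ι.name :=
  ⟨ι, hι, rfl, Res.Mem, ta, by simp [accRes, hop],
    hι', hlt, ta', tv', hop', Or.inl hguard, Or.inr (Or.inl haddr)⟩

namespace Step

variable {p : Prog} {σ σ' : State} {l : Obs} {a v : Val} {t : Name}

theorem eq_of_cmt (h : Step p σ l (Rule.cmt a v) t σ') : σ' = ⟨σ.I, σ.s, σ.C ∪ {t}, σ.F⟩ := by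
  cases h; rfl

theorem mem_C_of_cmt (h : Step p σ l (Rule.cmt a v) t σ') {ι' : MicroInstr} {ta' tv' : Name}
    (hι' : ι' ∈ σ.I) (hop' : ι'.op = Op.store Res.Mem ta' tv') (hlt : ι'.name < t)
    (hguard : ι'.guard.eval σ.s = some true) (haddr : σ.s ta' = some a) : ι'.name ∈ σ.C := by
  cases h with
  | cmt hι hname hop _ haddr₀ _ hmay =>
    subst hname
    exact hmay ⟨ι', mem_strMay_of_memStore hι hop hι' hop' hlt hguard (haddr.trans haddr₀.symm),
      rfl⟩

end Step

end MIL

open MIL in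
/-- a memory store cannot be committed before an earlier
uncommitted store to the same address. -/
theorem stmt14 (p : Prog) (σ0 σ1 σ2 : State) (hw : WFState σ0)
    (l1 l2 : Obs) (α1 : Rule) (t1 t2 : Name) (a v : Val)
    (h1 : Step p σ0 l1 α1 t1 σ1)
    (h2 : Step p σ1 l2 (Rule.cmt a v) t2 σ2) (hlt : t2 < t1) :
    ∀ v', α1 ≠ Rule.cmt a v' := by
  rintro v' rfl
  obtain rfl := h1.eq_of_cmt
  cases h2 with
  | cmt hι2 hname2 hop2 hval2 haddr2 hnc2 _ =>
    subst hname2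
    have hguard := hw.execGuard _ hι2 fun h => Option.some_ne_none v (hval2.symm.trans h)
    exact hnc2 (Or.inl (h1.mem_C_of_cmt hι2 hop2 hlt hguard haddr2))
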